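/- (Krawczyk uniqueness) With the setting of Krawczyk's theorem, if additionally √2 · ‖1ₙ − Y·□JF(I)‖_∞ < 1, where ‖A‖_∞ = max over matrices B ∈ A of the operator ∞-norm of B, then F has exactly one zero in I. -/

import Mathlib

open Set Pointwise

noncomputable section

/-- Pointwise addition of sets of reals. -/
def sadd (X Y : Set ℝ) : Set ℝ := Set.image2 (· + ·) X Y

/-- Pointwise subtraction of sets of reals. -/
def ssub (X Y : Set ℝ) : Set ℝ := Set.image2 (· - ·) X Y

/-- Pointwise multiplication of sets of reals. -/
def smul' (X Y : Set ℝ) : Set ℝ := Set.image2 (· * ·) X Y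

/-- The rectangular complex interval `X + iY`. -/
def cI (X Y : Set ℝ) : Set ℂ := {z | z.re ∈ X ∧ z.im ∈ Y}

/-- Real parts of a set of complex numbers. -/
def reS (S : Set ℂ) : Set ℝ := Complex.re '' S

/-- Imaginary parts of a set of complex numbers. -/
def imS (S : Set ℂ) : Set ℝ := Complex.im '' S

/-- Complex interval multiplication:
`(X+iY)·(W+iZ) = (X·W − Y·Z) + i(X·Z + Y·W)`. -/
def cmul (S T : Set ℂ) : Set ℂ :=
  cI (ssub (smul' (reS S) (reS T)) (smul' (imS S) (imS T)))
     (sadd (smul' (reS S) (imS T)) (smul' (imS S) (reS T)))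

/-- `S` is a rectangular complex interval. -/
def IsRect (S : Set ℂ) : Prop :=
  ∃ a b c d : ℝ, a ≤ b ∧ c ≤ d ∧ S = cI (Set.Icc a b) (Set.Icc c d)

variable {n : ℕ}

/-- The interval vector `I ∈ 𝕀ℂⁿ` determined by coordinate intervals `IV`. -/
def boxSet (IV : Fin n → Set ℂ) : Set (Fin n → ℂ) := {z | ∀ j, z j ∈ IV j}

/-- `F` is a square polynomial system. -/
def IsPolyMap (F : (Fin n → ℂ) → Fin n → ℂ) : Prop :=
  ∀ i, ∃ p : MvPolynomial (Fin n) ℂ, ∀ z, F z i = MvPolynomial.eval z p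

/-- The Jacobian matrix `JF(z)` of `F` at `z`. -/
def jac (F : (Fin n → ℂ) → Fin n → ℂ) (z : Fin n → ℂ) : Matrix (Fin n) (Fin n) ℂ :=
  fun i j => fderiv ℂ (fun w => F w i) z (Pi.single j 1)

/-- Entries of the interval matrix `1ₙ − Y·□JF(I)`, where `MJ` is the interval
enclosure of the Jacobian on `I`, computed in complex interval arithmetic. -/
def Bmat (Y : Matrix (Fin n) (Fin n) ℂ) (MJ : Fin n → Fin n → Set ℂ) :
    Fin n → Fin n → Set ℂ :=
  fun i j => ({(if i = j then (1 : ℂ) else 0)} : Set ℂ) - ∑ k, cmul {Y i k} (MJ k j)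

/-- Coordinates of the Krawczyk set
`K_{x,Y}(I) = x − Y·□F(x) + (1ₙ − Y·□JF(I))(I − x)`, where `FX` is the interval
enclosure `□F(x)` and `MJ` the interval enclosure `□JF(I)`. -/
def Kset (x : Fin n → ℂ) (Y : Matrix (Fin n) (Fin n) ℂ)
    (FX : Fin n → Set ℂ) (MJ : Fin n → Fin n → Set ℂ) (IV : Fin n → Set ℂ) :
    Fin n → Set ℂ :=
  fun i => (({x i} : Set ℂ) - ∑ j, cmul {Y i j} (FX j)) +
      ∑ j, cmul ((IV j) - {x j}) (Bmat Y MJ i j)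

/-- The `∞`-operator norm of a complex matrix (`Fin n → ℂ` carries the max norm). -/
def opNormInf (M : Matrix (Fin n) (Fin n) ℂ) : ℝ :=
  sSup {r | ∃ v : Fin n → ℂ, ‖v‖ = 1 ∧ r = ‖M.mulVec v‖}

/-- The norm `‖A‖_∞` of an interval matrix: the maximum of the `∞`-operator norms
over all matrices contained in it. -/
def imatNorm (B : Fin n → Fin n → Set ℂ) : ℝ :=
  sSup {r | ∃ M : Matrix (Fin n) (Fin n) ℂ, (∀ i j, M i j ∈ B i j) ∧ r = opNormInf M}


open Matrix MeasureTheory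

/-!
The map `G(z) = z - Y F(z)` has the zeros of `F` as its fixed points, since `Y` is invertible.
For `w, z ∈ I` the integral form of the mean value theorem gives `F z - F w = M (z - w)` with
`M = ∫₀¹ JF(w + t (z - w)) dt`, whose entries are averages of points of the convex closed
rectangles `□JF(I)` and so lie in them. Hence `G z - G w = (1 - Y M)(z - w)` with `1 - Y M` in
the interval matrix `1 - Y □JF(I)`: taking `w = x` shows `G z ∈ K_{x,Y}(I) ⊆ I`, and in general
`G` is Lipschitz on `I` with constant `‖1 - Y □JF(I)‖_∞ < 1`. Banach's fixed point theorem on the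
closed box `I` finishes the proof.
-/

section IntervalArithmetic

lemma IsCompact.image2 {α β γ : Type*} [TopologicalSpace α] [TopologicalSpace β]
    [TopologicalSpace γ] {s : Set α} {t : Set β} (hs : IsCompact s) (ht : IsCompact t)
    {f : α → β → γ} (hf : Continuous (Function.uncurry f)) : IsCompact (Set.image2 f s t) := by
  rw [← Set.image_uncurry_prod]
  exact (hs.prod ht).image hf

lemma isCompact_finsetSum {ι α : Type*} [AddCommMonoid α] [TopologicalSpace α] [ContinuousAdd α]
    (s : Finset ι) {S : ι → Set α} (hS : ∀ i ∈ s, IsCompact (S i)) :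
    IsCompact (∑ i ∈ s, S i) := by
  classical
  induction s using Finset.induction_on with
  | empty => exact isCompact_singleton
  | insert i s hi ih =>
    rw [Finset.sum_insert hi]
    exact (hS i (s.mem_insert_self i)).add (ih fun j hj => hS j (Finset.mem_insert_of_mem hj))

lemma isCompact_cI {X Y : Set ℝ} (hX : IsCompact X) (hY : IsCompact Y) : IsCompact (cI X Y) := by
  have := (hX.prod hY).image Complex.equivRealProdCLM.symm.continuous
  rwa [ContinuousLinearEquiv.image_symm_eq_preimage] at this

lemma IsRect.isCompact {S : Set ℂ} (h : IsRect S) : IsCompact S := by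
  obtain ⟨a, b, c, d, -, -, rfl⟩ := h
  exact isCompact_cI isCompact_Icc isCompact_Icc

lemma IsRect.convex {S : Set ℂ} (h : IsRect S) : Convex ℝ S := by
  obtain ⟨a, b, c, d, -, -, rfl⟩ := h
  exact (convex_Icc a b).is_linear_preimage Complex.reLm.isLinear |>.inter
    ((convex_Icc c d).is_linear_preimage Complex.imLm.isLinear)

lemma IsCompact.cmul {S T : Set ℂ} (hS : IsCompact S) (hT : IsCompact T) :
    IsCompact (cmul S T) := by
  have re := fun {U : Set ℂ} (hU : IsCompact U) => hU.image Complex.continuous_re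
  have im := fun {U : Set ℂ} (hU : IsCompact U) => hU.image Complex.continuous_im
  have mul := fun {X Y : Set ℝ} (hX : IsCompact X) (hY : IsCompact Y) =>
    hX.image2 (f := (· * ·)) hY continuous_mul
  exact isCompact_cI ((mul (re hS) (re hT)).image2 (mul (im hS) (im hT)) continuous_sub)
    ((mul (re hS) (im hT)).image2 (mul (im hS) (re hT)) continuous_add)

lemma isCompact_bmat (Y : Matrix (Fin n) (Fin n) ℂ) {MJ : Fin n → Fin n → Set ℂ}
    (hMJ : ∀ i j, IsCompact (MJ i j)) (i j : Fin n) : IsCompact (Bmat Y MJ i j) :=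
  isCompact_singleton.image2
    (isCompact_finsetSum _ fun k _ => isCompact_singleton.cmul (hMJ k j)) continuous_sub

lemma mul_mem_cmul {a b : ℂ} {S T : Set ℂ} (ha : a ∈ S) (hb : b ∈ T) : a * b ∈ cmul S T :=
  ⟨Complex.mul_re a b ▸ Set.mem_image2_of_mem
      (Set.mem_image2_of_mem ⟨a, ha, rfl⟩ ⟨b, hb, rfl⟩)
      (Set.mem_image2_of_mem ⟨a, ha, rfl⟩ ⟨b, hb, rfl⟩),
    Complex.mul_im a b ▸ Set.mem_image2_of_mem
      (Set.mem_image2_of_mem ⟨a, ha, rfl⟩ ⟨b, hb, rfl⟩)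
      (Set.mem_image2_of_mem ⟨a, ha, rfl⟩ ⟨b, hb, rfl⟩)⟩

lemma one_sub_mul_apply_mem_bmat (Y : Matrix (Fin n) (Fin n) ℂ) {MJ : Fin n → Fin n → Set ℂ}
    {M : Matrix (Fin n) (Fin n) ℂ} (hM : ∀ i j, M i j ∈ MJ i j) (i j : Fin n) :
    (1 - Y * M) i j ∈ Bmat Y MJ i j := by
  rw [Matrix.sub_apply, one_apply, mul_apply]
  exact Set.sub_mem_sub rfl <|
    Set.finsetSum_mem_finsetSum _ _ _ fun k _ => mul_mem_cmul rfl (hM k j)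

lemma mem_kset {x z v : Fin n → ℂ} {Y M : Matrix (Fin n) (Fin n) ℂ} {FX IV : Fin n → Set ℂ}
    {MJ : Fin n → Fin n → Set ℂ} (hv : ∀ j, v j ∈ FX j) (hM : ∀ i j, M i j ∈ MJ i j)
    (hz : z ∈ boxSet IV) (i : Fin n) :
    (x - Y *ᵥ v + (1 - Y * M) *ᵥ (z - x) : Fin n → ℂ) i ∈ Kset x Y FX MJ IV i := by
  simp only [Pi.add_apply, Pi.sub_apply, mulVec, dotProduct]
  refine Set.add_mem_add (Set.sub_mem_sub rfl <|
    Set.finsetSum_mem_finsetSum _ _ _ fun j _ => mul_mem_cmul rfl (hv j)) <|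
    Set.finsetSum_mem_finsetSum _ _ _ fun j _ => ?_
  rw [mul_comm]
  exact mul_mem_cmul (Set.sub_mem_sub (hz j) rfl) (one_sub_mul_apply_mem_bmat Y hM i j)

end IntervalArithmetic

section Norms

attribute [local instance] Matrix.linftyOpNormedAddCommGroup Matrix.linftyOpNormedSpace

lemma opNormInf_eq_linfty_opNorm (M : Matrix (Fin n) (Fin n) ℂ) : opNormInf M = ‖M‖ := by
  rw [linfty_opNorm_eq_opNorm, ← ContinuousLinearMap.sSup_sphere_eq_norm, opNormInf]
  congr! 1
  ext r
  simp [eq_comm]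

lemma norm_mulVec_le_opNormInf (M : Matrix (Fin n) (Fin n) ℂ) (v : Fin n → ℂ) :
    ‖M *ᵥ v‖ ≤ opNormInf M * ‖v‖ :=
  opNormInf_eq_linfty_opNorm M ▸ linfty_opNorm_mulVec M v

-- Compactness of the entries keeps the `sSup` defining `imatNorm B` from being a junk value.
lemma opNormInf_le_imatNorm {B : Fin n → Fin n → Set ℂ} (hB : ∀ i j, IsCompact (B i j))
    {M : Matrix (Fin n) (Fin n) ℂ} (hM : ∀ i j, M i j ∈ B i j) :
    opNormInf M ≤ imatNorm B := by
  have hK : IsCompact {M : Matrix (Fin n) (Fin n) ℂ | ∀ i j, M i j ∈ B i j} := by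
    have := isCompact_univ_pi fun i => isCompact_univ_pi (hB i)
    simp only [Set.pi, Set.mem_univ, true_imp_iff] at this
    exact this
  obtain ⟨C, hC⟩ := (hK.image continuous_norm).bddAbove
  refine le_csSup ⟨C, ?_⟩ ⟨M, hM, rfl⟩
  rintro r ⟨M', hM', rfl⟩
  rw [opNormInf_eq_linfty_opNorm]
  exact hC ⟨M', hM', rfl⟩

end Norms

section MeanValue

lemma Convex.intervalIntegral_zero_one_mem {E : Type*} [NormedAddCommGroup E]
    [NormedSpace ℝ E] [CompleteSpace E] {s : Set E} (hs : Convex ℝ s) (hsc : IsClosed s)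
    {f : ℝ → E} (hf : ContinuousOn f (Set.Icc 0 1)) (hfs : ∀ t ∈ Set.Icc (0 : ℝ) 1, f t ∈ s) :
    ∫ t in (0 : ℝ)..1, f t ∈ s := by
  have hI : Set.uIoc (0 : ℝ) 1 = Set.Ioc 0 1 := Set.uIoc_of_le zero_le_one
  have := hs.set_average_mem hsc (μ := volume) (t := Set.uIoc 0 1) (f := f) (by simp) (by simp)
    ((ae_restrict_iff' measurableSet_uIoc).2 (.of_forall fun t ht =>
      hfs t (Set.Ioc_subset_Icc_self (hI ▸ ht))))
    (hI ▸ hf.integrableOn_Icc.mono_set Set.Ioc_subset_Icc_self)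
  rwa [interval_average_eq, sub_zero, inv_one, one_smul] at this

lemma jac_mulVec (F : (Fin n → ℂ) → Fin n → ℂ) (p v : Fin n → ℂ) :
    jac F p *ᵥ v = fun i => fderiv ℂ (fun w => F w i) p v := by
  ext i
  conv_rhs => rw [← Finset.univ_sum_single v]
  simp only [mulVec, dotProduct, jac, map_sum]
  refine Finset.sum_congr rfl fun j _ => ?_
  rw [mul_comm, ← smul_eq_mul, ← map_smul, ← Pi.single_smul', smul_eq_mul, mul_one]

lemma continuous_jac_apply {F : (Fin n → ℂ) → Fin n → ℂ}
    (hF : ∀ i, ContDiff ℂ 1 fun v => F v i) (i j : Fin n) : Continuous fun p => jac F p i j :=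
  ((hF i).continuous_fderiv one_ne_zero).clm_apply continuous_const

lemma sub_eq_integral_jac_mulVec {F : (Fin n → ℂ) → Fin n → ℂ}
    (hF : ∀ i, ContDiff ℂ 1 fun v => F v i) (w z : Fin n → ℂ) :
    F z - F w =
      of (fun i j => ∫ t in (0 : ℝ)..1, jac F (w + t • (z - w)) i j) *ᵥ (z - w) := by
  have hcont : ∀ i j, Continuous fun t : ℝ => jac F (w + t • (z - w)) i j :=
    fun i j => (continuous_jac_apply hF i j).comp (by fun_prop)
  ext i
  have hderiv : ∀ t : ℝ, HasDerivAt (fun t : ℝ => F (w + t • (z - w)) i)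
      (∑ j, jac F (w + t • (z - w)) i j * (z - w) j) t := by
    intro t
    have hjac := congrFun (jac_mulVec F (w + t • (z - w)) (z - w)) i
    simp only [mulVec, dotProduct] at hjac
    rw [hjac]
    have hγ : HasDerivAt (fun t : ℝ => w + t • (z - w)) (z - w) t := by
      simpa using ((hasDerivAt_id t).smul_const (z - w)).const_add w
    exact (((hF i).differentiable one_ne_zero _).hasFDerivAt.restrictScalars ℝ).comp_hasDerivAt
      t hγ
  have hint : ∀ j, IntervalIntegrable (fun t : ℝ => jac F (w + t • (z - w)) i j * (z - w) j)
      volume 0 1 := fun j => ((hcont i j).mul continuous_const).intervalIntegrable 0 1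
  have hFTC := intervalIntegral.integral_eq_sub_of_hasDerivAt (fun t _ => hderiv t) <|
    (continuous_finsetSum _ fun j _ => (hcont i j).mul continuous_const).intervalIntegrable 0 1
  simp only [one_smul, zero_smul, add_zero, add_sub_cancel] at hFTC
  rw [Pi.sub_apply, ← hFTC, intervalIntegral.integral_finsetSum fun j _ => hint j]
  simp only [intervalIntegral.integral_mul_const, mulVec, dotProduct, of_apply]

lemma exists_sub_eq_mulVec_of_jac_mem {F : (Fin n → ℂ) → Fin n → ℂ}
    (hF : ∀ i, ContDiff ℂ 1 fun v => F v i) {MJ : Fin n → Fin n → Set ℂ}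
    (hMJc : ∀ i j, Convex ℝ (MJ i j)) (hMJcl : ∀ i j, IsClosed (MJ i j)) {w z : Fin n → ℂ}
    (hseg : ∀ t ∈ Set.Icc (0 : ℝ) 1, ∀ i j, jac F (w + t • (z - w)) i j ∈ MJ i j) :
    ∃ M : Matrix (Fin n) (Fin n) ℂ, (∀ i j, M i j ∈ MJ i j) ∧ F z - F w = M *ᵥ (z - w) :=
  ⟨_, fun i j => (hMJc i j).intervalIntegral_zero_one_mem (hMJcl i j)
    ((continuous_jac_apply hF i j).comp (by fun_prop)).continuousOn fun t ht => hseg t ht i j,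
    sub_eq_integral_jac_mulVec hF w z⟩

lemma IsPolyMap.contDiff_apply {F : (Fin n → ℂ) → Fin n → ℂ} (hF : IsPolyMap F) (i : Fin n) :
    ContDiff ℂ 1 fun v => F v i := by
  obtain ⟨p, hp⟩ := hF i
  simpa only [hp] using (AnalyticOnNhd.eval_mvPolynomial p).contDiff

end MeanValue

lemma boxSet_eq_univ_pi (IV : Fin n → Set ℂ) : boxSet IV = Set.univ.pi IV := by
  ext z
  simp [boxSet]

lemma convex_boxSet {IV : Fin n → Set ℂ} (h : ∀ j, Convex ℝ (IV j)) : Convex ℝ (boxSet IV) :=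
  boxSet_eq_univ_pi IV ▸ convex_pi fun j _ => h j

lemma isClosed_boxSet {IV : Fin n → Set ℂ} (h : ∀ j, IsClosed (IV j)) :
    IsClosed (boxSet IV) :=
  boxSet_eq_univ_pi IV ▸ isClosed_set_pi fun j _ => h j

theorem LipschitzOnWith.existsUnique_isFixedPt {α : Type*} [MetricSpace α] {f : α → α}
    {s : Set α} {K : NNReal} (hK : K < 1) (hf : LipschitzOnWith K f s) (hsc : IsComplete s)
    (hne : s.Nonempty) (hsf : Set.MapsTo f s s) :
    ∃! x, x ∈ s ∧ Function.IsFixedPt f x := by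
  have hcon : ContractingWith K (hsf.restrict f s s) := ⟨hK, hf.mapsToRestrict hsf⟩
  obtain ⟨x₀, hx₀⟩ := hne
  obtain ⟨x, hx, hfx, -⟩ := hcon.exists_fixedPoint' hsc hsf hx₀ (edist_ne_top _ _)
  refine ⟨x, ⟨hx, hfx⟩, fun y ⟨hy, hfy⟩ => ?_⟩
  exact congrArg Subtype.val <|
    hcon.fixedPoint_unique' (x := ⟨y, hy⟩) (y := ⟨x, hx⟩) (Subtype.ext hfy) (Subtype.ext hfx)

section SimplifiedNewton

def simplifiedNewton (Y : Matrix (Fin n) (Fin n) ℂ) (F : (Fin n → ℂ) → Fin n → ℂ)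
    (z : Fin n → ℂ) : Fin n → ℂ :=
  z - Y *ᵥ F z

lemma simplifiedNewton_sub {Y M : Matrix (Fin n) (Fin n) ℂ} {F : (Fin n → ℂ) → Fin n → ℂ}
    {w z : Fin n → ℂ} (h : F z - F w = M *ᵥ (z - w)) :
    simplifiedNewton Y F z - simplifiedNewton Y F w = (1 - Y * M) *ᵥ (z - w) := by
  rw [simplifiedNewton, simplifiedNewton, sub_mulVec, one_mulVec, ← mulVec_mulVec, ← h,
    mulVec_sub]
  abel

lemma isFixedPt_simplifiedNewton_iff {Y : Matrix (Fin n) (Fin n) ℂ} (hY : IsUnit Y)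
    (F : (Fin n → ℂ) → Fin n → ℂ) (z : Fin n → ℂ) :
    Function.IsFixedPt (simplifiedNewton Y F) z ↔ F z = 0 := by
  rw [Function.IsFixedPt, simplifiedNewton, sub_eq_self]
  exact (mulVec_injective_iff_isUnit.2 hY).eq_iff' (mulVec_zero Y)

lemma mapsTo_simplifiedNewton {F : (Fin n → ℂ) → Fin n → ℂ} {IV FX : Fin n → Set ℂ}
    {MJ : Fin n → Fin n → Set ℂ} {x : Fin n → ℂ} {Y : Matrix (Fin n) (Fin n) ℂ}
    (hFX : ∀ j, F x j ∈ FX j) (hK : ∀ i, Kset x Y FX MJ IV i ⊆ IV i)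
    (hmvt : ∀ z ∈ boxSet IV, ∃ M : Matrix (Fin n) (Fin n) ℂ,
      (∀ i j, M i j ∈ MJ i j) ∧ F z - F x = M *ᵥ (z - x)) :
    Set.MapsTo (simplifiedNewton Y F) (boxSet IV) (boxSet IV) := by
  intro z hz i
  obtain ⟨M, hM, hFzx⟩ := hmvt z hz
  rw [eq_add_of_sub_eq' (simplifiedNewton_sub (Y := Y) hFzx)]
  exact hK i (mem_kset hFX hM hz i)

lemma lipschitzOnWith_simplifiedNewton {F : (Fin n → ℂ) → Fin n → ℂ}
    {MJ : Fin n → Fin n → Set ℂ} (hMJ : ∀ i j, IsCompact (MJ i j))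
    (Y : Matrix (Fin n) (Fin n) ℂ) {s : Set (Fin n → ℂ)}
    (hmvt : ∀ w ∈ s, ∀ z ∈ s, ∃ M : Matrix (Fin n) (Fin n) ℂ,
      (∀ i j, M i j ∈ MJ i j) ∧ F z - F w = M *ᵥ (z - w)) :
    LipschitzOnWith (imatNorm (Bmat Y MJ)).toNNReal (simplifiedNewton Y F) s := by
  refine LipschitzOnWith.of_dist_le_mul fun z hz w hw => ?_
  obtain ⟨M, hM, hFzw⟩ := hmvt w hw z hz
  rw [dist_eq_norm, dist_eq_norm, simplifiedNewton_sub hFzw]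
  calc ‖(1 - Y * M) *ᵥ (z - w)‖ ≤ opNormInf (1 - Y * M) * ‖z - w‖ :=
        norm_mulVec_le_opNormInf _ _
    _ ≤ (imatNorm (Bmat Y MJ)).toNNReal * ‖z - w‖ := by
        gcongr
        exact (opNormInf_le_imatNorm (isCompact_bmat Y hMJ)
          (one_sub_mul_apply_mem_bmat Y hM)).trans (Real.le_coe_toNNReal _)

end SimplifiedNewton

theorem krawczyk_uniqueness_general (F : (Fin n → ℂ) → Fin n → ℂ) (hF : IsPolyMap F)
    (IV : Fin n → Set ℂ) (hIV : ∀ j, IsRect (IV j))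
    (x : Fin n → ℂ) (hx : x ∈ boxSet IV)
    (Y : Matrix (Fin n) (Fin n) ℂ) (hY : IsUnit Y)
    (FX : Fin n → Set ℂ) (hFX : ∀ j, F x j ∈ FX j)
    (MJ : Fin n → Fin n → Set ℂ) (hMJr : ∀ i j, IsRect (MJ i j))
    (hMJ : ∀ z ∈ boxSet IV, ∀ i j, jac F z i j ∈ MJ i j)
    (hK : ∀ i, Kset x Y FX MJ IV i ⊆ IV i)
    (hnorm : Real.sqrt 2 * imatNorm (Bmat Y MJ) < 1) :
    ∃! z, z ∈ boxSet IV ∧ F z = 0 := by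
  have hmvt : ∀ w ∈ boxSet IV, ∀ z ∈ boxSet IV, ∃ M : Matrix (Fin n) (Fin n) ℂ,
      (∀ i j, M i j ∈ MJ i j) ∧ F z - F w = M *ᵥ (z - w) := fun w hw z hz =>
    exists_sub_eq_mulVec_of_jac_mem hF.contDiff_apply (fun i j => (hMJr i j).convex)
      (fun i j => (hMJr i j).isCompact.isClosed) fun t ht =>
        hMJ _ ((convex_boxSet fun j => (hIV j).convex).add_smul_sub_mem hw hz ht)
  have hκ : (imatNorm (Bmat Y MJ)).toNNReal < 1 :=
    Real.toNNReal_lt_one.2 (by nlinarith [Real.one_lt_sqrt_two])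
  simpa only [isFixedPt_simplifiedNewton_iff hY] using
    LipschitzOnWith.existsUnique_isFixedPt hκ
      (lipschitzOnWith_simplifiedNewton (fun i j => (hMJr i j).isCompact) Y hmvt)
      (isClosed_boxSet fun j => (hIV j).isCompact.isClosed).isComplete ⟨x, hx⟩
      (mapsTo_simplifiedNewton hFX hK (hmvt x hx))

theorem krawczyk_uniqueness (F : (Fin n → ℂ) → Fin n → ℂ) (hF : IsPolyMap F)
    (IV : Fin n → Set ℂ) (hIV : ∀ j, IsRect (IV j))
    (x : Fin n → ℂ) (hx : x ∈ boxSet IV)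
    (Y : Matrix (Fin n) (Fin n) ℂ) (hY : IsUnit Y)
    (FX : Fin n → Set ℂ) (hFXr : ∀ j, IsRect (FX j)) (hFX : ∀ j, F x j ∈ FX j)
    (MJ : Fin n → Fin n → Set ℂ) (hMJr : ∀ i j, IsRect (MJ i j))
    (hMJ : ∀ z ∈ boxSet IV, ∀ i j, jac F z i j ∈ MJ i j)
    (hK : ∀ i, Kset x Y FX MJ IV i ⊆ IV i)
    (hnorm : Real.sqrt 2 * imatNorm (Bmat Y MJ) < 1) :
    ∃! z, z ∈ boxSet IV ∧ F z = 0 :=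
  krawczyk_uniqueness_general F hF IV hIV x hx Y hY FX hFX MJ hMJr hMJ hK hnorm
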